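/- arXiv:2002.10487 — 4 statements merged into one kernel-verified Lean document; each statement's English description precedes it below -/
import Mathlib

section
/- (Reparameterization theorem) Let q: ℝ^k → ℝ^d with k ≥ d, and suppose H_F(q(u))^{-1} = J_q(u) H_G(u)^{-1} J_q(u)^T for all u in the domain of G. If u(t) solves the CMD flow u̇(t) = -η H_G(u(t))^{-1} ∇_u(L∘q)(u(t)), then w(t) := q(u(t)) solves the CMD flow ẇ(t) = -η H_F(w(t))^{-1} ∇L(w(t)). -/
open Matrix

/-- Reparameterization theorem: a CMD flow for `G` on `u` with the composite
loss `L ∘ q` induces the CMD flow for `F` on `w = q(u)`. -/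
theorem reparameterization
    {d k : ℕ} (hkd : d ≤ k)
    (F : (Fin d → ℝ) → ℝ) (G : (Fin k → ℝ) → ℝ)
    (HF : (Fin d → ℝ) → Matrix (Fin d) (Fin d) ℝ)
    (HG : (Fin k → ℝ) → Matrix (Fin k) (Fin k) ℝ)
    (hHF : ∀ v, (HF v).PosDef) (hHG : ∀ v, (HG v).PosDef)
    (q : (Fin k → ℝ) → (Fin d → ℝ))
    (Jq : (Fin k → ℝ) → Matrix (Fin d) (Fin k) ℝ)
    (gradL : (Fin d → ℝ) → (Fin d → ℝ))
    (η : ℝ) (hη : 0 < η)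
    -- the reparameterization condition H_F(q(u))⁻¹ = J_q(u) H_G(u)⁻¹ J_q(u)ᵀ
    (hcond : ∀ u, (HF (q u))⁻¹ = Jq u * (HG u)⁻¹ * (Jq u)ᵀ)
    (u : ℝ → (Fin k → ℝ)) (u' : ℝ → (Fin k → ℝ))
    (hu : ∀ t, HasDerivAt u (u' t) t)
    -- chain rule: d/dt q(u(t)) = J_q(u(t)) u̇(t)
    (hchain : ∀ t, HasDerivAt (fun s => q (u s)) ((Jq (u t)) *ᵥ (u' t)) t)
    -- CMD flow on u for G with loss L∘q, where ∇_u(L∘q)(u) = J_q(u)ᵀ ∇L(q(u)):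
    (hflow : ∀ t, u' t = (-η) • ((HG (u t))⁻¹ *ᵥ ((Jq (u t))ᵀ *ᵥ gradL (q (u t))))) :
    -- CMD flow on w = q(u) for F:
    ∀ t, HasDerivAt (fun s => q (u s))
        ((-η) • ((HF (q (u t)))⁻¹ *ᵥ gradL (q (u t)))) t := by
  intro t
  have h := hchain t
  rw [hflow t, mulVec_smul] at h
  rw [hcond (u t), ← mulVec_mulVec, ← mulVec_mulVec]
  exact h
end

section
/- (EGU as GD) For q(u) = (1/4) u ⊙ u on ℝ^k (componentwise square), the condition J_q(u) J_q(u)^T = diag(q(u)) holds, so if u(t) solves u̇ = -η ∇_u L((1/4)u^{⊙2}) then w(t) = (1/4) u(t)^{⊙2} solves the exponentiated gradient flow d/dt log(w_i(t)) = -η ∂_i L(w(t)) for each coordinate i. -/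
/-! The reparametrization `w = ¼ u²` turns the gradient flow on `u` into the exponentiated
gradient flow on `w`: since `d/dt log (¼ uᵢ²) = 2 u̇ᵢ / uᵢ`, the factor `½ uᵢ` in the
gradient `∇_u (L ∘ q)` cancels exactly against the `2 / uᵢ` from the logarithm. -/

theorem HasDerivAt.log_const_mul_sq {f : ℝ → ℝ} {f' c t : ℝ} (hf : HasDerivAt f f' t)
    (hc : c ≠ 0) (hft : f t ≠ 0) :
    HasDerivAt (fun s => Real.log (c * f s ^ 2)) (2 * f' / f t) t := by
  have hsq : HasDerivAt (fun s => c * f s ^ 2) (c * (2 * f t * f')) t :=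
    ((hf.pow 2).const_mul c).congr_deriv (by ring)
  convert hsq.log (by positivity) using 1
  field_simp

theorem egu_as_gd_general
    {d : ℕ}
    (gradL : (Fin d → ℝ) → (Fin d → ℝ))  -- the gradient ∇L of the loss
    (η : ℝ)
    (u : ℝ → (Fin d → ℝ)) (u' : ℝ → (Fin d → ℝ))
    (hu0 : ∀ t i, u t i ≠ 0)
    (hu : ∀ t, HasDerivAt u (u' t) t)
    -- GD flow on u for L ∘ q, with ∇_u(L∘q)(u) = ½ u ⊙ ∇L(¼ u^{⊙2}):
    (hflow : ∀ t i, u' t i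
        = -η * ((1 / 2) * u t i * gradL (fun j => (1 / 4) * (u t j) ^ 2) i)) :
    -- the condition J_q(u) J_q(u)ᵀ = diag(q(u)):
    (∀ v : Fin d → ℝ, ∀ i, ((1 / 2) * v i) * ((1 / 2) * v i) = (1 / 4) * (v i) ^ 2) ∧
    -- w(t) = ¼ u(t)^{⊙2} follows the EGU flow d/dt log wᵢ = -η ∂ᵢL(w):
    (∀ t i, HasDerivAt (fun s => Real.log ((1 / 4) * (u s i) ^ 2))
        (-η * gradL (fun j => (1 / 4) * (u t j) ^ 2) i) t) := by
  refine ⟨fun v i => by ring, fun t i => ?_⟩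
  have hlog := (hasDerivAt_pi.mp (hu t) i).log_const_mul_sq (c := 1 / 4) (by norm_num) (hu0 t i)
  convert hlog using 1
  rw [hflow t i]
  field_simp [hu0 t i]

/-- EGU as GD: with `q(u) = ¼ u ⊙ u`, GD on `u` for the composite loss
simulates the exponentiated gradient flow on `w = ¼ u^{⊙2}`. -/
theorem egu_as_gd
    {d : ℕ}
    (gradL : (Fin d → ℝ) → (Fin d → ℝ))  -- the gradient ∇L of the loss
    (η : ℝ) (hη : 0 < η)
    (u : ℝ → (Fin d → ℝ)) (u' : ℝ → (Fin d → ℝ))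
    (hu0 : ∀ t i, u t i ≠ 0)
    (hu : ∀ t, HasDerivAt u (u' t) t)
    -- GD flow on u for L ∘ q, with ∇_u(L∘q)(u) = ½ u ⊙ ∇L(¼ u^{⊙2}):
    (hflow : ∀ t i, u' t i
        = -η * ((1 / 2) * u t i * gradL (fun j => (1 / 4) * (u t j) ^ 2) i)) :
    -- the condition J_q(u) J_q(u)ᵀ = diag(q(u)):
    (∀ v : Fin d → ℝ, ∀ i, ((1 / 2) * v i) * ((1 / 2) * v i) = (1 / 4) * (v i) ^ 2) ∧
    -- w(t) = ¼ u(t)^{⊙2} follows the EGU flow d/dt log wᵢ = -η ∂ᵢL(w):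
    (∀ t i, HasDerivAt (fun s => Real.log ((1 / 4) * (u s i) ^ 2))
        (-η * gradL (fun j => (1 / 4) * (u t j) ^ 2) i) t) :=
  egu_as_gd_general gradL η u u' hu0 hu hflow
end

section
/- (Burg as GD) For q(u) = exp(u) componentwise, J_q(u) J_q(u)^T = diag(exp(u))² = H_F(q(u))^{-1} where F(w) = -Σᵢ log wᵢ; consequently if u̇(t) = -η ∇_u L(exp(u(t))) then w(t) = exp(u(t)) satisfies d/dt(-1/wᵢ(t)) = -η ∂ᵢL(w(t)) for each i. -/
/-!
Gradient descent on `u` with the reparametrization `w = q(u)` is mirror descent on `w` as soon as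
`f'(q(u)) q'(u)² = 1`, i.e. `J_q J_qᵀ = H_F(q)⁻¹`: by the chain rule `d/dt f(w) = f'(w) q'(u) u̇`,
and `u̇ = -η q'(u) ∇L(w)` turns this into `-η f'(w) q'(u)² ∇L(w) = -η ∇L(w)`. For the Burg entropy
`f(w) = -1/w` has `f'(w) = 1/w²`, which `q = exp` matches since `q' = q`.
-/

theorem HasDerivAt.comp_reparam_of_gradient_flow {q f x : ℝ → ℝ} {a b x' η g t : ℝ}
    (hx : HasDerivAt x x' t) (hq : HasDerivAt q a (x t)) (hf : HasDerivAt f b (q (x t)))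
    (hmetric : b * a ^ 2 = 1) (hflow : x' = -η * (a * g)) :
    HasDerivAt (fun s => f (q (x s))) (-η * g) t := by
  refine (hf.comp t (hq.comp t hx)).congr_deriv ?_
  linear_combination b * a * hflow - η * g * hmetric

theorem hasDerivAt_neg_one_div {w : ℝ} (hw : w ≠ 0) :
    HasDerivAt (fun v => -(1 / v)) ((w ^ 2)⁻¹) w := by
  simpa only [one_div, neg_neg] using (hasDerivAt_inv hw).fun_neg

theorem burg_as_gd_general
    {d : ℕ}
    (gradL : (Fin d → ℝ) → (Fin d → ℝ))  -- the gradient ∇L of the loss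
    (η : ℝ)
    (u : ℝ → (Fin d → ℝ)) (u' : ℝ → (Fin d → ℝ))
    (hu : ∀ t, HasDerivAt u (u' t) t)
    -- GD flow on u : u̇ = -η exp(u) ⊙ ∇L(exp(u)):
    (hflow : ∀ t i, u' t i
        = -η * (Real.exp (u t i) * gradL (fun j => Real.exp (u t j)) i)) :
    -- the condition J_q(u) J_q(u)ᵀ = diag(exp u)² = H_F(q(u))⁻¹:
    (∀ v : Fin d → ℝ, ∀ i,
        Real.exp (v i) * Real.exp (v i) = (Real.exp (v i)) ^ 2) ∧
    -- w(t) = exp(u(t)) follows the Burg mirror flow d/dt(-1/wᵢ) = -η ∂ᵢL(w):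
    (∀ t i, HasDerivAt (fun s => -(1 / Real.exp (u s i)))
        (-η * gradL (fun j => Real.exp (u t j)) i) t) := by
  refine ⟨fun v i => (sq _).symm, fun t i => ?_⟩
  have hmetric : ((Real.exp (u t i)) ^ 2)⁻¹ * Real.exp (u t i) ^ 2 = 1 :=
    inv_mul_cancel₀ (pow_ne_zero 2 (Real.exp_ne_zero _))
  exact (hasDerivAt_pi.mp (hu t) i).comp_reparam_of_gradient_flow (Real.hasDerivAt_exp _)
    (hasDerivAt_neg_one_div (Real.exp_ne_zero _)) hmetric (hflow t i)

/-- Burg updates as GD: with `q(u) = exp(u)` componentwise, GD on `u`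
simulates the Burg mirror flow with link `f(w) = -1 ⊘ w`. -/
theorem burg_as_gd
    {d : ℕ}
    (gradL : (Fin d → ℝ) → (Fin d → ℝ))  -- the gradient ∇L of the loss
    (η : ℝ) (hη : 0 < η)
    (u : ℝ → (Fin d → ℝ)) (u' : ℝ → (Fin d → ℝ))
    (hu : ∀ t, HasDerivAt u (u' t) t)
    -- GD flow on u : u̇ = -η exp(u) ⊙ ∇L(exp(u)):
    (hflow : ∀ t i, u' t i
        = -η * (Real.exp (u t i) * gradL (fun j => Real.exp (u t j)) i)) :
    -- the condition J_q(u) J_q(u)ᵀ = diag(exp u)² = H_F(q(u))⁻¹: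
    (∀ v : Fin d → ℝ, ∀ i,
        Real.exp (v i) * Real.exp (v i) = (Real.exp (v i)) ^ 2) ∧
    -- w(t) = exp(u(t)) follows the Burg mirror flow d/dt(-1/wᵢ) = -η ∂ᵢL(w):
    (∀ t i, HasDerivAt (fun s => -(1 / Real.exp (u s i)))
        (-η * gradL (fun j => Real.exp (u t j)) i) t) :=
  burg_as_gd_general gradL η u u' hu hflow
end

section
/- (EGU as Burg) If w(t) > 0 satisfies the Burg mirror flow d/dt(-1/wᵢ) = -η (log wᵢ)/(2wᵢ) · ∂ᵢL(v(t)) with v(t) := (1/4)(log w(t))^{⊙2}, then v(t) satisfies the EGU flow d/dt log vᵢ(t) = -η ∂ᵢ L(v(t)). -/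
/-!
Writing the Burg flow as `d/dt (-1/wᵢ) = wᵢ'/wᵢ²` gives `wᵢ' = -η wᵢ (log wᵢ) ∂ᵢL / 2`, i.e.
`d/dt log wᵢ = -η (log wᵢ) ∂ᵢL / 2`. Since `log vᵢ = 2 log |log wᵢ| - log 4`, its derivative is
`2 (log wᵢ)' / log wᵢ = -η ∂ᵢL`.
-/

theorem HasDerivAt.of_neg_one_div {𝕜 : Type*} [NontriviallyNormedField 𝕜] {f : 𝕜 → 𝕜}
    {c t : 𝕜} (hf : HasDerivAt (fun s => -(1 / f s)) c t) (ht : f t ≠ 0) :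
    HasDerivAt f (c * f t ^ 2) t := by
  have hinv := (hf.inv (by simpa using ht)).neg
  have hf_eq : -(fun s => -(1 / f s))⁻¹ = f := by
    funext s
    simp
  rw [hf_eq] at hinv
  refine hinv.congr_deriv ?_
  field_simp

theorem HasDerivAt.log_const_mul_sq_s8 {u : ℝ → ℝ} {u' t a : ℝ} (hu : HasDerivAt u u' t)
    (ha : a ≠ 0) (ht : u t ≠ 0) :
    HasDerivAt (fun s => Real.log (a * u s ^ 2)) (2 * u' / u t) t := by
  have hsq : HasDerivAt (fun s => a * u s ^ 2) (a * (2 * u t * u')) t := by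
    simpa using (hu.pow 2).const_mul a
  convert hsq.log (by positivity) using 1
  field_simp

theorem egu_as_burg_general
    {d : ℕ}
    (gradL : (Fin d → ℝ) → (Fin d → ℝ))  -- the gradient ∇L of the loss
    (η : ℝ)
    (w : ℝ → (Fin d → ℝ))
    (hwpos : ∀ t i, 0 < w t i)
    (hlog : ∀ t i, Real.log (w t i) ≠ 0)
    -- Burg mirror flow: d/dt(-1/wᵢ) = -η (log wᵢ)/(2wᵢ) ∂ᵢL(v(t))
    -- with v(t) = ¼ (log w(t))^{⊙2}:
    (hflow : ∀ t i, HasDerivAt (fun s => -(1 / w s i))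
        (-η * (Real.log (w t i) / (2 * w t i))
          * gradL (fun j => (1 / 4) * (Real.log (w t j)) ^ 2) i) t) :
    -- v(t) follows the EGU flow d/dt log vᵢ = -η ∂ᵢL(v):
    ∀ t i, HasDerivAt (fun s => Real.log ((1 / 4) * (Real.log (w s i)) ^ 2))
        (-η * gradL (fun j => (1 / 4) * (Real.log (w t j)) ^ 2) i) t := by
  intro t i
  have hw_ne : w t i ≠ 0 := (hwpos t i).ne'
  have hw := (hflow t i).of_neg_one_div hw_ne
  convert HasDerivAt.log_const_mul_sq_s8 (hw.log hw_ne) (a := 1 / 4) (by norm_num) (hlog t i)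
    using 1
  field_simp [hlog t i]

/-- EGU as Burg: the Burg mirror flow on `w` with the composite loss
simulates the EGU flow on `v = ¼ (log w)^{⊙2}`. -/
theorem egu_as_burg
    {d : ℕ}
    (gradL : (Fin d → ℝ) → (Fin d → ℝ))  -- the gradient ∇L of the loss
    (η : ℝ) (hη : 0 < η)
    (w : ℝ → (Fin d → ℝ))
    (hwpos : ∀ t i, 0 < w t i)
    (hlog : ∀ t i, Real.log (w t i) ≠ 0)
    -- Burg mirror flow: d/dt(-1/wᵢ) = -η (log wᵢ)/(2wᵢ) ∂ᵢL(v(t))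
    -- with v(t) = ¼ (log w(t))^{⊙2}:
    (hflow : ∀ t i, HasDerivAt (fun s => -(1 / w s i))
        (-η * (Real.log (w t i) / (2 * w t i))
          * gradL (fun j => (1 / 4) * (Real.log (w t j)) ^ 2) i) t) :
    -- v(t) follows the EGU flow d/dt log vᵢ = -η ∂ᵢL(v):
    ∀ t i, HasDerivAt (fun s => Real.log ((1 / 4) * (Real.log (w s i)) ^ 2))
        (-η * gradL (fun j => (1 / 4) * (Real.log (w t j)) ^ 2) i) t :=
  egu_as_burg_general gradL η w hwpos hlog hflow
end
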